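/- arXiv:2309.14676 — 6 statements merged into one kernel-verified Lean document; each statement's English description precedes it below -/
import Mathlib

section
/- Let J be the standard 2m×2m symplectic matrix (J = [[0, I_m],[-I_m, 0]]). Then the span over C of the matrices {r (Jr)^T : r ∈ Z^{2m}} equals the symplectic Lie algebra sp_{2m}(C) = {X : JX = -X^T J}. -/
open Matrix

noncomputable def Jstd (m : ℕ) : Matrix (Fin m ⊕ Fin m) (Fin m ⊕ Fin m) ℂ :=
  Matrix.fromBlocks 0 1 (-1) 0

/-!
Left multiplication by `J` is injective. It sends `r (J r)ᵀ` to `(J r)(J r)ᵀ`, and `J` permutes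
`ℤ^{2m}`, so it maps the span on the left onto the span of the integer squares `b bᵀ`; and it maps
`X` to a symmetric matrix exactly when `X ∈ sp_{2m}`, because `Jᵀ = -J`. It remains to see that
the squares `b bᵀ` (`b` integral) span the symmetric matrices, which follows from the polarization
`e_i e_jᵀ + e_j e_iᵀ = (e_i + e_j)(e_i + e_j)ᵀ - e_i e_iᵀ - e_j e_jᵀ` since `2` is invertible.
-/

open Submodule

namespace Matrix

section IntOuterSquares

variable (K n : Type*) [CommRing K]

def intOuterSquares : Set (Matrix n n K) :=
  Set.range fun b : n → ℤ => vecMulVec (fun i => (b i : K)) (fun i => (b i : K))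

variable {K n}

lemma vecMulVec_add_vecMulVec_mem_span_intOuterSquares (b c : n → ℤ) :
    vecMulVec (fun i => (b i : K)) (fun i => (c i : K)) +
        vecMulVec (fun i => (c i : K)) (fun i => (b i : K)) ∈
      span K (intOuterSquares K n) := by
  have hsq (v : n → ℤ) : vecMulVec (fun i => (v i : K)) (fun i => (v i : K)) ∈
      span K (intOuterSquares K n) := subset_span ⟨v, rfl⟩
  have polarization :
      vecMulVec (fun i => (b i : K)) (fun i => (c i : K)) +
          vecMulVec (fun i => (c i : K)) (fun i => (b i : K)) =
        vecMulVec (fun i => ((b + c) i : K)) (fun i => ((b + c) i : K)) -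
          vecMulVec (fun i => (b i : K)) (fun i => (b i : K)) -
          vecMulVec (fun i => (c i : K)) (fun i => (c i : K)) := by
    ext i j
    simp only [vecMulVec_apply, Pi.add_apply, Int.cast_add, add_apply, sub_apply]
    ring
  rw [polarization]
  exact sub_mem (sub_mem (hsq _) (hsq _)) (hsq _)

lemma single_add_single_mem_span_intOuterSquares [DecidableEq n] (i j : n) :
    single i j (1 : K) + single j i 1 ∈ span K (intOuterSquares K n) := by
  have hcast (k : n) : (fun l => ((Pi.single k 1 : n → ℤ) l : K)) = Pi.single k 1 := by
    ext l
    rcases eq_or_ne l k with rfl | h <;> simp [*]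
  simpa only [hcast, single_eq_single_vecMulVec_single] using
    vecMulVec_add_vecMulVec_mem_span_intOuterSquares (K := K) (Pi.single i 1) (Pi.single j 1)

lemma isSymm_of_mem_span_intOuterSquares {X : Matrix n n K}
    (hX : X ∈ span K (intOuterSquares K n)) : X.IsSymm := by
  induction hX using span_induction with
  | mem _ h =>
    obtain ⟨b, rfl⟩ := h
    exact transpose_vecMulVec _ _
  | zero => exact isSymm_zero
  | add _ _ _ _ hA hB => exact hA.add hB
  | smul c _ _ hA => exact hA.smul c

lemma mem_span_intOuterSquares_of_isSymm [Fintype n] [DecidableEq n] [Invertible (2 : K)]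
    {S : Matrix n n K} (hS : S.IsSymm) : S ∈ span K (intOuterSquares K n) := by
  have hsum : ∑ i, ∑ j, S i j • (single i j (1 : K) + single j i 1) = (2 : K) • S := by
    have hdiag : ∑ i, ∑ j, S i j • single i j (1 : K) = S := by
      conv_rhs => rw [matrix_eq_sum_single S]
      simp [smul_single]
    have htrans : ∑ i, ∑ j, S i j • single j i (1 : K) = S := by
      rw [Finset.sum_comm]
      conv_rhs => rw [← hS.eq, matrix_eq_sum_single Sᵀ]
      simp [smul_single]
    simp only [smul_add, Finset.sum_add_distrib, hdiag, htrans, two_smul]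
  have hS2 : S = ⅟(2 : K) • ∑ i, ∑ j, S i j • (single i j (1 : K) + single j i 1) := by
    rw [hsum, smul_smul, invOf_mul_self, one_smul]
  rw [hS2]
  exact smul_mem _ _ <| sum_mem fun i _ => sum_mem fun j _ =>
    smul_mem _ _ (single_add_single_mem_span_intOuterSquares i j)

lemma span_intOuterSquares [Fintype n] [DecidableEq n] [Invertible (2 : K)] :
    (span K (intOuterSquares K n) : Set (Matrix n n K)) = {S | S.IsSymm} :=
  Set.ext fun _ => ⟨isSymm_of_mem_span_intOuterSquares, mem_span_intOuterSquares_of_isSymm⟩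

lemma image_mul_vecMulVec_mulVec_eq_intOuterSquares [Fintype n] [DecidableEq n]
    {A : Matrix n n ℤ} (hA : IsUnit A) :
    (A.map (Int.castRingHom K) * ·) ''
        {X | ∃ r : n → ℤ, X = vecMulVec (fun i => (r i : K))
          (A.map (Int.castRingHom K) *ᵥ fun i => (r i : K))} =
      intOuterSquares K n := by
  have hcast (r : n → ℤ) : A.map (Int.castRingHom K) *ᵥ (fun i => (r i : K)) =
      fun i => ((A *ᵥ r) i : K) := by
    ext i
    exact ((Int.castRingHom K).map_mulVec A r i).symm
  have hgen : {X | ∃ r : n → ℤ, X = vecMulVec (fun i => (r i : K))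
      (A.map (Int.castRingHom K) *ᵥ fun i => (r i : K))} =
        Set.range fun r : n → ℤ => vecMulVec (fun i => (r i : K))
          (A.map (Int.castRingHom K) *ᵥ fun i => (r i : K)) := by
    ext X
    exact exists_congr fun _ => eq_comm
  rw [hgen, ← Set.range_comp, intOuterSquares]
  conv_rhs => rw [← (mulVec_surjective_iff_isUnit.mpr hA).range_comp]
  congr 1
  ext r : 1
  simp only [Function.comp_apply, mul_vecMulVec, hcast]

end IntOuterSquares

lemma isUnit_J (l R : Type*) [DecidableEq l] [Fintype l] [CommRing R] : IsUnit (J l R) :=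
  (isUnit_iff_isUnit_det _).mpr (isUnit_det_J l R)

end Matrix

open Matrix

lemma Jstd_eq_neg_J (m : ℕ) : Jstd m = -J (Fin m) ℂ := by
  simp [Jstd, J, fromBlocks_neg]

lemma Jstd_eq_map (m : ℕ) : Jstd m = (-J (Fin m) ℤ).map (Int.castRingHom ℂ) := by
  rw [Matrix.map_neg _ (map_neg _), map_J, Jstd_eq_neg_J]

lemma Jstd_mul_isSymm_iff (m : ℕ) (X : Matrix (Fin m ⊕ Fin m) (Fin m ⊕ Fin m) ℂ) :
    (Jstd m * X).IsSymm ↔ Jstd m * X = -Xᵀ * Jstd m := by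
  have hJt : (Jstd m)ᵀ = -Jstd m := by rw [Jstd_eq_neg_J, transpose_neg, J_transpose]
  rw [IsSymm, transpose_mul, hJt, mul_neg, ← neg_mul, eq_comm]

theorem span_outer_products_eq_sp (m : ℕ) :
    (Submodule.span ℂ
      {X : Matrix (Fin m ⊕ Fin m) (Fin m ⊕ Fin m) ℂ |
        ∃ r : Fin m ⊕ Fin m → ℤ,
          X = vecMulVec (fun i => (r i : ℂ)) (Jstd m *ᵥ (fun i => (r i : ℂ)))} :
      Set (Matrix (Fin m ⊕ Fin m) (Fin m ⊕ Fin m) ℂ))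
    = {X : Matrix (Fin m ⊕ Fin m) (Fin m ⊕ Fin m) ℂ |
        Jstd m * X = -Xᵀ * Jstd m} := by
  set s := {X : Matrix (Fin m ⊕ Fin m) (Fin m ⊕ Fin m) ℂ |
    ∃ r : Fin m ⊕ Fin m → ℤ, X = vecMulVec (fun i => (r i : ℂ)) (Jstd m *ᵥ fun i => (r i : ℂ))}
  let L := LinearMap.mulLeft ℂ (Jstd m)
  have hL : Function.Injective L :=
    (Jstd_eq_neg_J m ▸ (isUnit_J (Fin m) ℂ).neg).mul_right_injective
  have himage : L '' span ℂ s = {S | S.IsSymm} := by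
    rw [← map_coe, ← span_image]
    change SetLike.coe (span ℂ ((Jstd m * ·) '' s)) = _
    simp only [s, Jstd_eq_map]
    rw [image_mul_vecMulVec_mulVec_eq_intOuterSquares (isUnit_J (Fin m) ℤ).neg,
      span_intOuterSquares]
  calc (span ℂ s : Set _) = L ⁻¹' (L '' span ℂ s) := (hL.preimage_image _).symm
    _ = {X | Jstd m * X = -Xᵀ * Jstd m} := by
      rw [himage]
      exact Set.ext fun X => Jstd_mul_isSymm_iff m X
end

section
/- Let B be a non-degenerate N×N complex skew-symmetric matrix. Then the span of {r (Br)^T : r ∈ Z^N} equals G_B = {X ∈ gl_N(C) : BX = -X^T B}. In particular the linear map ψ_B sending T(r) to r(Br)^T is surjective onto G_B. -/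
/-!
Because `vecMulVec r (B *ᵥ r) = vecMulVec r r * Bᵀ`, the span in question is the image under
`X ↦ X * Bᵀ` of the span of the integral squares `r rᵀ`, and the latter is the space of all
symmetric matrices: polarization with `r = eᵢ, eⱼ, eᵢ + eⱼ` produces `Eᵢⱼ + Eⱼᵢ`. On the other
side, skew-symmetry of `B` turns `B X = -Xᵀ B` into symmetry of `B X`, and for `X = S Bᵀ` the
matrix `B X = B S Bᵀ` is symmetric exactly when `S` is, `B` being invertible.
-/

open Matrix

namespace Matrix

variable {ι R : Type*} [CommRing R]

variable (ι R) in
def symmetricSubmodule : Submodule R (Matrix ι ι R) where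
  carrier := {A | A.IsSymm}
  add_mem' := IsSymm.add
  zero_mem' := isSymm_zero
  smul_mem' c _ hA := hA.smul c

@[simp]
theorem mem_symmetricSubmodule {A : Matrix ι ι R} : A ∈ symmetricSubmodule ι R ↔ A.IsSymm :=
  Iff.rfl

theorem vecMulVec_add_add_sub (u v : ι → R) :
    vecMulVec (u + v) (u + v) - vecMulVec u u - vecMulVec v v = vecMulVec u v + vecMulVec v u := by
  simp only [add_vecMulVec, vecMulVec_add]
  abel

section Fintype

variable [Fintype ι]

theorem vecMulVec_mulVec_eq_mul_transpose {l m : Type*} (u : l → R) (v : ι → R)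
    (A : Matrix m ι R) : vecMulVec u (A *ᵥ v) = vecMulVec u v * Aᵀ := by
  rw [vecMulVec_mul, vecMul_transpose]

theorem mul_eq_neg_transpose_mul_iff_isSymm {B X : Matrix ι ι R} (hB : Bᵀ = -B) :
    B * X = -Xᵀ * B ↔ (B * X).IsSymm := by
  rw [IsSymm, transpose_mul, hB, Matrix.mul_neg, Matrix.neg_mul, eq_comm]

variable [DecidableEq ι]

theorem span_vecMulVec_intCast_self [Invertible (2 : R)] :
    Submodule.span R {A : Matrix ι ι R | ∃ r : ι → ℤ,
      A = vecMulVec (fun i => (r i : R)) (fun i => (r i : R))} = symmetricSubmodule ι R := by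
  set V := Submodule.span R {A : Matrix ι ι R | ∃ r : ι → ℤ,
      A = vecMulVec (fun i => (r i : R)) (fun i => (r i : R))}
  apply le_antisymm
  · rw [Submodule.span_le]
    rintro _ ⟨r, rfl⟩
    exact transpose_vecMulVec _ _
  intro S (hS : S.IsSymm)
  have hgen (r : ι → ℤ) : vecMulVec (fun k => (r k : R)) (fun k => (r k : R)) ∈ V :=
    Submodule.subset_span ⟨r, rfl⟩
  have hpair (i j : ι) : single i j (1 : R) + single j i 1 ∈ V := by
    have hi := hgen (Pi.single i 1)
    have hj := hgen (Pi.single j 1)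
    have hij := hgen (Pi.single i 1 + Pi.single j 1)
    simp only [Pi.add_apply, Int.cast_add, Int.cast_one,
      Pi.apply_single (fun _ => (Int.cast : ℤ → R)) (fun _ => Int.cast_zero)] at hi hj hij
    rw [single_eq_single_vecMulVec_single, single_eq_single_vecMulVec_single,
      ← vecMulVec_add_add_sub]
    exact V.sub_mem (V.sub_mem hij hi) hj
  have hsum : ∑ i, ∑ j, S i j • (single i j (1 : R) + single j i 1) = (2 : R) • S := by
    have htranspose : ∑ i, ∑ j, single j i (S i j) = S := by
      conv_rhs => rw [matrix_eq_sum_single S]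
      rw [Finset.sum_comm]
      exact Finset.sum_congr rfl fun j _ => Finset.sum_congr rfl fun i _ => by rw [hS.apply i j]
    simp only [smul_add, Finset.sum_add_distrib, smul_single, smul_eq_mul, mul_one, htranspose,
      ← matrix_eq_sum_single, two_smul]
  rw [← invOf_smul_smul (2 : R) S, ← hsum]
  exact V.smul_mem _ (V.sum_mem fun i _ => V.sum_mem fun j _ => V.smul_mem _ (hpair i j))

theorem isSymm_mul_mul_transpose_iff {A S : Matrix ι ι R} (hA : IsUnit A.det) :
    (A * S * Aᵀ).IsSymm ↔ S.IsSymm := by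
  have hA' : IsUnit A := (isUnit_iff_isUnit_det A).mpr hA
  have hAt : IsUnit Aᵀ := (isUnit_transpose A).mpr hA'
  rw [IsSymm, IsSymm, transpose_mul, transpose_mul, transpose_transpose, ← Matrix.mul_assoc]
  exact ⟨fun h => hA'.mul_left_cancel (hAt.mul_right_cancel h), fun h => by rw [h]⟩

theorem mem_map_mulRight_transpose_symmetricSubmodule_iff {B X : Matrix ι ι R}
    (hB : IsUnit B.det) :
    X ∈ (symmetricSubmodule ι R).map (LinearMap.mulRight R Bᵀ) ↔ (B * X).IsSymm := by
  have hBt : IsUnit Bᵀ.det := by rwa [det_transpose]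
  constructor
  · rintro ⟨S, hS, rfl⟩
    rwa [LinearMap.mulRight_apply, ← Matrix.mul_assoc, isSymm_mul_mul_transpose_iff hB]
  · intro hX
    refine ⟨X * Bᵀ⁻¹, ?_, nonsing_inv_mul_cancel_right _ _ hBt⟩
    rwa [SetLike.mem_coe, mem_symmetricSubmodule, ← isSymm_mul_mul_transpose_iff hB,
      Matrix.mul_assoc, nonsing_inv_mul_cancel_right _ _ hBt]

end Fintype

end Matrix

theorem span_outer_products_eq_GB (N : ℕ) (B : Matrix (Fin N) (Fin N) ℂ)
    (hB : Bᵀ = -B) (hInv : IsUnit B.det) :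
    (Submodule.span ℂ
      {X : Matrix (Fin N) (Fin N) ℂ |
        ∃ r : Fin N → ℤ,
          X = vecMulVec (fun i => (r i : ℂ)) (B *ᵥ (fun i => (r i : ℂ)))} :
      Set (Matrix (Fin N) (Fin N) ℂ))
    = {X : Matrix (Fin N) (Fin N) ℂ | B * X = -Xᵀ * B} := by
  have hgens : {X : Matrix (Fin N) (Fin N) ℂ | ∃ r : Fin N → ℤ,
        X = vecMulVec (fun i => (r i : ℂ)) (B *ᵥ (fun i => (r i : ℂ)))} =
      LinearMap.mulRight ℂ Bᵀ '' {S | ∃ r : Fin N → ℤ,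
        S = vecMulVec (fun i => (r i : ℂ)) (fun i => (r i : ℂ))} := by
    ext X
    simp [vecMulVec_mulVec_eq_mul_transpose, eq_comm]
  ext X
  rw [hgens, Submodule.span_image, span_vecMulVec_intCast_self, SetLike.mem_coe,
    mem_map_mulRight_transpose_symmetricSubmodule_iff hInv]
  exact (mul_eq_neg_transpose_mul_iff_isSymm hB).symm
end

section
/- Let B be an N×N complex skew-symmetric matrix. Define on the free C-vector space T with basis {T(r) : r ∈ Z^N} the bracket [T(r), T(s)] = (Br|s)(T(r+s) - T(r) - T(s)). This bracket is antisymmetric and satisfies the Jacobi identity, so T is a Lie algebra. -/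
open Matrix

/-!
The bracket is bilinear, and the Jacobiator `J x y z` is linear in `x` and invariant under cyclic
permutations, hence trilinear; so both identities need only be checked on basis vectors `T(r)`.
There antisymmetry is `(Br|s) = -(Bs|r)`, and the Jacobi identity follows from expanding
`(Br|s+t) = (Br|s) + (Br|t)` and collecting the coefficients of the `T(·)`.
-/

/-- The bilinear form `(Br | s)`. -/
noncomputable def dotB {N : ℕ} (B : Matrix (Fin N) (Fin N) ℂ)
    (r s : Fin N → ℤ) : ℂ :=
  (B *ᵥ (fun i => (r i : ℂ))) ⬝ᵥ (fun i => (s i : ℂ))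

/-- The basis element `T(r)` of the free vector space on `ℤ^N`. -/
noncomputable def Tbasis {N : ℕ} (r : Fin N → ℤ) : (Fin N → ℤ) →₀ ℂ :=
  Finsupp.single r 1

/-- The bracket on basis elements:
`[T(r), T(s)] = (Br|s)(T(r+s) - T(r) - T(s))`. -/
noncomputable def brBasis {N : ℕ} (B : Matrix (Fin N) (Fin N) ℂ)
    (r s : Fin N → ℤ) : (Fin N → ℤ) →₀ ℂ :=
  dotB B r s • (Tbasis (r + s) - Tbasis r - Tbasis s)

/-- The bilinear extension of the bracket to the free vector space. -/
noncomputable def brExt {N : ℕ} (B : Matrix (Fin N) (Fin N) ℂ)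
    (x y : (Fin N → ℤ) →₀ ℂ) : (Fin N → ℤ) →₀ ℂ :=
  x.sum fun r c => y.sum fun s d => (c * d) • brBasis B r s

namespace LinearMap

variable {ι R M : Type*} [CommRing R] [AddCommGroup M] [Module R M]

theorem antisymm_of_basis (b : Module.Basis ι R M) {L : M →ₗ[R] M →ₗ[R] M}
    (h : ∀ i j, L (b i) (b j) = -L (b j) (b i)) (x y : M) : L x y = -L y x := by
  have : L = -L.flip := ext_basis b b h
  exact congr($this x y)

theorem jacobi_of_basis (b : Module.Basis ι R M) {L : M →ₗ[R] M →ₗ[R] M}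
    (h : ∀ i j k,
      L (b i) (L (b j) (b k)) + L (b j) (L (b k) (b i)) + L (b k) (L (b i) (b j)) = 0)
    (x y z : M) : L x (L y z) + L y (L z x) + L z (L x y) = 0 := by
  have left : ∀ y z, (∀ i, L (b i) (L y z) + L y (L z (b i)) + L z (L (b i) y) = 0) →
      ∀ x, L x (L y z) + L y (L z x) + L z (L x y) = 0 := by
    intro y z hyz x
    have : L.flip (L y z) + L y ∘ₗ L z + L z ∘ₗ L.flip y = 0 := b.ext hyz
    exact congr($this x)
  have cyclic : ∀ x y z : M, L x (L y z) + L y (L z x) + L z (L x y)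
      = L y (L z x) + L z (L x y) + L x (L y z) := fun _ _ _ => by abel
  refine left y z (fun i => ?_) x
  rw [cyclic]
  refine left z (b i) (fun j => ?_) y
  rw [cyclic]
  exact left (b i) (b j) (fun k => h k i j) z

end LinearMap

section

variable {N : ℕ} (B : Matrix (Fin N) (Fin N) ℂ)

theorem dotB_add_right (r s t : Fin N → ℤ) : dotB B r (s + t) = dotB B r s + dotB B r t := by
  simp [dotB, dotProduct, mul_add, Finset.sum_add_distrib]

variable {B}

theorem dotB_swap (hB : Bᵀ = -B) (r s : Fin N → ℤ) : dotB B r s = -dotB B s r := by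
  rw [dotB, dotB, ← vecMul_transpose, hB, vecMul_neg, neg_dotProduct, ← dotProduct_mulVec,
    dotProduct_comm]

theorem brBasis_swap (hB : Bᵀ = -B) (r s : Fin N → ℤ) : brBasis B r s = -brBasis B s r := by
  rw [brBasis, brBasis, dotB_swap hB, add_comm s r]
  module

variable (B)

noncomputable def brBilin : ((Fin N → ℤ) →₀ ℂ) →ₗ[ℂ] ((Fin N → ℤ) →₀ ℂ) →ₗ[ℂ] (Fin N → ℤ) →₀ ℂ :=
  Finsupp.linearCombination ℂ fun r => Finsupp.linearCombination ℂ (brBasis B r)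

theorem brExt_eq_brBilin (x y : (Fin N → ℤ) →₀ ℂ) : brExt B x y = brBilin B x y := by
  simp [brExt, brBilin, Finsupp.linearCombination_apply, Finsupp.smul_sum, smul_smul]

theorem brBilin_single (r s : Fin N → ℤ) :
    brBilin B (Finsupp.single r 1) (Finsupp.single s 1) = brBasis B r s := by
  simp [brBilin]

theorem brBilin_single_brBasis (r s t : Fin N → ℤ) :
    brBilin B (Finsupp.single r 1) (brBasis B s t)
      = dotB B s t • (brBasis B r (s + t) - brBasis B r s - brBasis B r t) := by
  simp only [brBasis, Tbasis, map_smul, map_sub, brBilin_single]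

theorem jacobi_brBasis (hB : Bᵀ = -B) (r s t : Fin N → ℤ) :
    brBilin B (Finsupp.single r 1) (brBasis B s t)
      + brBilin B (Finsupp.single s 1) (brBasis B t r)
      + brBilin B (Finsupp.single t 1) (brBasis B r s) = 0 := by
  rw [brBilin_single_brBasis, brBilin_single_brBasis, brBilin_single_brBasis]
  simp only [brBasis, dotB_add_right]
  rw [dotB_swap hB r t, dotB_swap hB s r, dotB_swap hB t s]
  -- brings the indices `r + (s + t)`, `s + (t + r)`, `t + (r + s)`, ... to a common normal form
  abel_nf
  module

end

theorem bracket_antisymm_and_jacobi (N : ℕ) (B : Matrix (Fin N) (Fin N) ℂ)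
    (hB : Bᵀ = -B) :
    (∀ x y : (Fin N → ℤ) →₀ ℂ, brExt B x y = -brExt B y x) ∧
    (∀ x y z : (Fin N → ℤ) →₀ ℂ,
      brExt B x (brExt B y z) + brExt B y (brExt B z x)
        + brExt B z (brExt B x y) = 0) := by
  simp only [brExt_eq_brBilin]
  refine ⟨LinearMap.antisymm_of_basis Finsupp.basisSingleOne fun r s => ?_,
    LinearMap.jacobi_of_basis Finsupp.basisSingleOne fun r s t => ?_⟩
  · simpa only [Finsupp.coe_basisSingleOne, brBilin_single] using brBasis_swap hB r s
  · simpa only [Finsupp.coe_basisSingleOne, brBilin_single] using jacobi_brBasis B hB r s t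
end

section
/- In the Lie algebra T with bracket [T(r),T(s)] = (Br|s)(T(r+s) - T(r) - T(s)), the map ψ_B : T(r) ↦ r(Br)^T is a Lie algebra homomorphism into gl_N(C), i.e., [r(Br)^T, s(Bs)^T] = (Br|s)((r+s)(B(r+s))^T - r(Br)^T - s(Bs)^T). -/
open Matrix

variable {n R : Type*} [CommRing R]

lemma Matrix.vecMulVec_add_add_sub_sub (u v w x : n → R) :
    vecMulVec (u + v) (w + x) - vecMulVec u w - vecMulVec v x
      = vecMulVec u x + vecMulVec v w := by
  rw [add_vecMulVec, vecMulVec_add, vecMulVec_add]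
  abel

variable [Fintype n]

lemma Matrix.mulVec_dotProduct_of_transpose_eq_neg {B : Matrix n n R} (hB : Bᵀ = -B)
    (u v : n → R) : (B *ᵥ v) ⬝ᵥ u = -((B *ᵥ u) ⬝ᵥ v) := by
  rw [dotProduct_comm, dotProduct_mulVec, ← mulVec_transpose, hB, neg_mulVec, neg_dotProduct]

/-- Both sides equal `(Bu ⬝ᵥ v) • (u (Bv)ᵀ + v (Bu)ᵀ)`, since skew-symmetry gives
`Bv ⬝ᵥ u = -(Bu ⬝ᵥ v)`. -/
theorem Matrix.vecMulVec_mulVec_commutator {B : Matrix n n R} (hB : Bᵀ = -B) (u v : n → R) :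
    vecMulVec u (B *ᵥ u) * vecMulVec v (B *ᵥ v) - vecMulVec v (B *ᵥ v) * vecMulVec u (B *ᵥ u)
      = ((B *ᵥ u) ⬝ᵥ v) •
          (vecMulVec (u + v) (B *ᵥ (u + v)) - vecMulVec u (B *ᵥ u) - vecMulVec v (B *ᵥ v)) := by
  rw [vecMulVec_mul_vecMulVec, vecMulVec_mul_vecMulVec, vecMulVec_smul, vecMulVec_smul,
    mulVec_dotProduct_of_transpose_eq_neg hB u v, mulVec_add, vecMulVec_add_add_sub_sub,
    smul_add, neg_smul, sub_neg_eq_add]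

theorem psiB_is_hom (N : ℕ) (B : Matrix (Fin N) (Fin N) ℂ) (hB : Bᵀ = -B)
    (r s : Fin N → ℤ) :
    vecMulVec (fun i => (r i : ℂ)) (B *ᵥ (fun i => (r i : ℂ)))
        * vecMulVec (fun i => (s i : ℂ)) (B *ᵥ (fun i => (s i : ℂ)))
      - vecMulVec (fun i => (s i : ℂ)) (B *ᵥ (fun i => (s i : ℂ)))
        * vecMulVec (fun i => (r i : ℂ)) (B *ᵥ (fun i => (r i : ℂ)))
    = ((B *ᵥ (fun i => (r i : ℂ))) ⬝ᵥ (fun i => (s i : ℂ))) •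
        (vecMulVec (fun i => ((r + s) i : ℂ)) (B *ᵥ (fun i => ((r + s) i : ℂ)))
          - vecMulVec (fun i => (r i : ℂ)) (B *ᵥ (fun i => (r i : ℂ)))
          - vecMulVec (fun i => (s i : ℂ)) (B *ᵥ (fun i => (s i : ℂ)))) := by
  have hcast : (fun i => ((r + s) i : ℂ)) = (fun i => (r i : ℂ)) + fun i => (s i : ℂ) := by
    ext i
    simp
  rw [hcast]
  exact vecMulVec_mulVec_commutator hB _ _
end

section
/- Each I_q = span{T_q(s; r_1,…,r_q)} is an ideal of the Lie algebra T (with bracket [T(r),T(s)] = (Br|s)(T(r+s)-T(r)-T(s))), and moreover [I_p, I_q] ⊆ I_{p+q-2} whenever p+q ≥ 3. -/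
open Matrix

/-- The element `T(r)` (with the convention `T(0) = 0`). -/
noncomputable def TT {N : ℕ} (r : Fin N → ℤ) : (Fin N → ℤ) →₀ ℂ :=
  Finsupp.single r 1 - Finsupp.single 0 1

/-- `T_q(s; r_1, …, r_q) = Σ_{I ⊆ {1,…,q}} (-1)^{|I|} T(s + Σ_{i∈I} r_i)`. -/
noncomputable def Tq {N : ℕ} (q : ℕ) (s : Fin N → ℤ) (r : Fin q → (Fin N → ℤ)) :
    (Fin N → ℤ) →₀ ℂ :=
  ∑ I : Finset (Fin q), ((-1 : ℂ) ^ I.card) • TT (s + ∑ i ∈ I, r i)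

/-- `I_q` is the span of all the `T_q` expressions. -/
noncomputable def Iq (N : ℕ) (q : ℕ) : Submodule ℂ ((Fin N → ℤ) →₀ ℂ) :=
  Submodule.span ℂ
    {x | ∃ (s : Fin N → ℤ) (r : Fin q → (Fin N → ℤ)), x = Tq q s r}

/-- The bracket of `T(r)` with a general element, extended linearly. -/
noncomputable def brT {N : ℕ} (B : Matrix (Fin N) (Fin N) ℂ)
    (r : Fin N → ℤ) (x : (Fin N → ℤ) →₀ ℂ) : (Fin N → ℤ) →₀ ℂ :=
  x.sum fun s c => c • (dotB B r s • (TT (r + s) - TT r - TT s))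

/-- The bracket of two general elements, extended bilinearly. -/
noncomputable def brF {N : ℕ} (B : Matrix (Fin N) (Fin N) ℂ)
    (x y : (Fin N → ℤ) →₀ ℂ) : (Fin N → ℤ) →₀ ℂ :=
  x.sum fun r c => c • brT B r y

/-!
Send `T(r)` to `X^r - 1` in the Laurent polynomial ring `ℂ[ℤ^N]`. Since `∑_I (-1)^|I| = 0`,
`T_q(s; r)` becomes `X^s ∏ᵢ (1 - X^{rᵢ})`, so for `q ≥ 1` the space `I_q` is the `q`-th power
`J^q` of the augmentation ideal `J`, and `I_0 ⊆ J`.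

Let `D_φ` be the derivation `X^g ↦ φ(g) X^g` of a weight `φ : ℤ^N → ℂ` and `P x = x - ε(x)` the
projection onto `J`. Since `(Br|s)` is additive in `s` and linear in `r`, the bracket becomes
`[T(r), y] = (X^r - 1) · P(D_{(Br|·)} y)` and `[x, y] = ∑ⱼ P(D_{eⱼ} x) · P(D_{(Beⱼ|·)} y)`.
A derivation maps `J^{m+1}` into `J^m`, so `P ∘ D_φ` maps `J^m` into `J^{max(m-1,1)}`, and the
degree bounds follow from `J^a J^b ⊆ J^{a+b}`.
-/

theorem Derivation.mem_pow_of_mem_pow_succ {R A : Type*} [CommSemiring R] [CommSemiring A]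
    [Algebra R A] (D : Derivation R A A) {I : Ideal A} (n : ℕ) {x : A} (hx : x ∈ I ^ (n + 1)) :
    D x ∈ I ^ n := by
  induction n generalizing x with
  | zero => simp
  | succ n ih =>
    rw [pow_succ'] at hx
    refine Submodule.mul_induction_on hx (fun a ha b hb => ?_) fun x y hx hy => ?_
    · rw [D.leibniz, smul_eq_mul, smul_eq_mul, pow_succ']
      exact add_mem (Ideal.mul_mem_mul ha (ih hb)) (Ideal.mul_mem_right _ _ (pow_succ' I n ▸ hb))
    · rw [map_add]; exact add_mem hx hy

namespace AddMonoidAlgebra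

variable {k G : Type*} [CommRing k] [AddCommMonoid G]

variable (k G) in
noncomputable def augmentation : k[G] →ₐ[k] k := lift k k G 1

@[simp]
theorem augmentation_single (g : G) (c : k) : augmentation k G (single g c) = c := by
  simp [augmentation, lift_single]

variable (k G) in
noncomputable def augmentationIdeal : Ideal k[G] := RingHom.ker (augmentation k G)

theorem mem_augmentationIdeal {x : k[G]} : x ∈ augmentationIdeal k G ↔ augmentation k G x = 0 :=
  RingHom.mem_ker

theorem single_sub_one_mem_augmentationIdeal (g : G) :
    single g (1 : k) - 1 ∈ augmentationIdeal k G := by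
  simp [mem_augmentationIdeal]

theorem prod_one_sub_single_mem_pow {ι : Type*} (s : Finset ι) (r : ι → G) :
    ∏ i ∈ s, (1 - single (r i) (1 : k)) ∈ augmentationIdeal k G ^ s.card := by
  rw [← Finset.prod_const]
  exact Ideal.prod_mem_prod fun i _ => by
    simpa using neg_mem (single_sub_one_mem_augmentationIdeal (k := k) (r i))

variable (k G) in
noncomputable def augmentationProj : k[G] →ₗ[k] k[G] :=
  LinearMap.id - Algebra.linearMap k k[G] ∘ₗ (augmentation k G).toLinearMap

theorem augmentationProj_apply (x : k[G]) :
    augmentationProj k G x = x - augmentation k G x • 1 := by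
  simp [augmentationProj, Algebra.algebraMap_eq_smul_one]

@[simp]
theorem augmentationProj_single (g : G) (c : k) :
    augmentationProj k G (single g c) = c • (single g 1 - 1) := by
  simp [augmentationProj_apply, smul_sub]

theorem augmentationProj_mem (x : k[G]) : augmentationProj k G x ∈ augmentationIdeal k G := by
  simp [augmentationProj_apply, mem_augmentationIdeal]

theorem augmentationProj_of_mem {x : k[G]} (hx : x ∈ augmentationIdeal k G) :
    augmentationProj k G x = x := by
  rw [augmentationProj_apply, mem_augmentationIdeal.mp hx, zero_smul, sub_zero]

theorem augmentationProj_eq_sum (x : k[G]) :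
    augmentationProj k G x = x.coeff.sum fun g c => c • (single g 1 - 1) := by
  induction x using induction_linear with
  | zero => simp
  | add x y hx hy =>
    rw [map_add, hx, hy, coeff_add,
      Finsupp.sum_add_index' (fun _ => by simp) (fun _ _ _ => add_smul _ _ _)]
  | single g c => simp

variable (k G) in
noncomputable def prodOneSubSpan (q : ℕ) : Submodule k k[G] :=
  Submodule.span k {x | ∃ (s : G) (r : Fin q → G), x = single s 1 * ∏ i, (1 - single (r i) 1)}

theorem mul_one_sub_single_mem_prodOneSubSpan {q : ℕ} {x : k[G]} (hx : x ∈ prodOneSubSpan k G q)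
    (t : G) : x * (1 - single t 1) ∈ prodOneSubSpan k G (q + 1) := by
  refine Submodule.span_le (p := (prodOneSubSpan k G (q + 1)).comap (LinearMap.mulRight k _))
    |>.mpr ?_ hx
  rintro _ ⟨s, r, rfl⟩
  refine Submodule.subset_span ⟨s, Fin.snoc r t, ?_⟩
  simp [Fin.prod_univ_castSucc, mul_assoc]

theorem mem_prodOneSubSpan_of_mem_pow (q : ℕ) {x : k[G]}
    (hx : x ∈ augmentationIdeal k G ^ q) : x ∈ prodOneSubSpan k G q := by
  induction q generalizing x with
  | zero =>
    rw [← sum_coeff_single x, Finsupp.sum]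
    refine Submodule.sum_mem _ fun g _ => ?_
    have hg : single g 1 ∈ prodOneSubSpan k G 0 :=
      Submodule.subset_span ⟨g, Fin.elim0, by simp⟩
    simpa [smul_single'] using Submodule.smul_mem _ (x.coeff g) hg
  | succ q ih =>
    rw [pow_succ] at hx
    refine Submodule.mul_induction_on hx (fun a ha b hb => ?_) fun _ _ => add_mem
    rw [← augmentationProj_of_mem hb, augmentationProj_eq_sum, Finsupp.sum, Finset.mul_sum]
    refine Submodule.sum_mem _ fun g _ => ?_
    rw [mul_smul_comm, ← neg_sub, mul_neg, smul_neg]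
    exact neg_mem <| Submodule.smul_mem _ _ <| mul_one_sub_single_mem_prodOneSubSpan (ih ha) g

variable (k) in
noncomputable def weightMap (φ : G →+ k) : k[G] →ₗ[k] k[G] :=
  Finsupp.linearCombination k (fun g => φ g • single g (1 : k)) ∘ₗ
    (coeffLinearEquiv k).toLinearMap

theorem weightMap_single (φ : G →+ k) (g : G) (c : k) :
    weightMap k φ (single g c) = single g (c * φ g) := by
  simp [weightMap, coeffLinearEquiv]

variable (k) in
noncomputable def weightDerivation (φ : G →+ k) : Derivation k k[G] k[G] :=
  Derivation.mk' (weightMap k φ) fun x y => by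
    induction x using induction_linear with
    | zero => simp
    | add x x' hx hx' => simp only [add_mul, map_add, hx, hx', add_smul, smul_add]; abel
    | single a c =>
      induction y using induction_linear with
      | zero => simp
      | add y y' hy hy' => simp only [mul_add, map_add, hy, hy', add_smul, smul_add]; abel
      | single b d =>
        simp only [single_mul_single, weightMap_single, smul_eq_mul, map_add, add_comm b,
          ← single_add]
        ring_nf

@[simp]
theorem weightDerivation_single (φ : G →+ k) (g : G) (c : k) :
    weightDerivation k φ (single g c) = single g (c * φ g) :=
  weightMap_single φ g c

theorem weightDerivation_sum_smul {ι : Type*} (s : Finset ι) (c : ι → k) (φ : ι → G →+ k)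
    (x : k[G]) :
    weightDerivation k (∑ i ∈ s, c i • φ i) x = ∑ i ∈ s, c i • weightDerivation k (φ i) x := by
  induction x using induction_linear with
  | zero => simp
  | add x y hx hy => simp only [map_add, hx, hy, smul_add, Finset.sum_add_distrib]
  | single g a =>
    simp only [weightDerivation_single, AddMonoidHom.finsetSum_apply, AddMonoidHom.smul_apply,
      smul_single', Finset.mul_sum, smul_eq_mul, mul_left_comm a]
    exact map_sum (singleAddHom g) _ _

theorem augmentationProj_derivation_mem_pow (D : Derivation k k[G] k[G]) {m : ℕ} {x : k[G]}
    (hx : x ∈ augmentationIdeal k G ^ m) :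
    augmentationProj k G (D x) ∈ augmentationIdeal k G ^ max (m - 1) 1 := by
  obtain hm | ⟨n, rfl⟩ : m ≤ 1 ∨ ∃ n, m = n + 2 := by
    rcases m with _ | _ | n <;> simp
  · rw [max_eq_right (by omega), pow_one]
    exact augmentationProj_mem _
  · have hD := D.mem_pow_of_mem_pow_succ (n + 1) hx
    rw [augmentationProj_of_mem (Ideal.pow_le_self n.succ_ne_zero hD)]
    simpa using hD

end AddMonoidAlgebra

open AddMonoidAlgebra

section

variable {N : ℕ}

noncomputable def dotBAddHom (B : Matrix (Fin N) (Fin N) ℂ) (r : Fin N → ℤ) :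
    (Fin N → ℤ) →+ ℂ where
  toFun := dotB B r
  map_zero' := by simp [dotB]
  map_add' s t := by simp [dotB, ← dotProduct_add]; rfl

noncomputable def coordAddHom (j : Fin N) : (Fin N → ℤ) →+ ℂ :=
  (Int.castAddHom ℂ).comp (Pi.evalAddMonoidHom (fun _ => ℤ) j)

@[simp]
theorem dotBAddHom_apply (B : Matrix (Fin N) (Fin N) ℂ) (r s : Fin N → ℤ) :
    dotBAddHom B r s = dotB B r s := rfl

theorem dotBAddHom_eq_sum (B : Matrix (Fin N) (Fin N) ℂ) (r : Fin N → ℤ) :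
    dotBAddHom B r = ∑ j, (r j : ℂ) • dotBAddHom B (Pi.single j 1) := by
  refine AddMonoidHom.ext fun s => ?_
  simp [dotB, mulVec, dotProduct, Finset.mul_sum, Finset.sum_mul, Pi.single_apply]
  rw [Finset.sum_comm]
  exact Finset.sum_congr rfl fun _ _ => Finset.sum_congr rfl fun _ _ => by ring

theorem ofCoeff_TT (r : Fin N → ℤ) : ofCoeff (TT r) = single r (1 : ℂ) - 1 := rfl

theorem Tq_zero (s : Fin N → ℤ) (r : Fin 0 → Fin N → ℤ) : Tq 0 s r = TT s := by
  simp [Tq, Subsingleton.elim (default : Finset (Fin 0)) ∅]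

theorem ofCoeff_Tq {q : ℕ} (hq : q ≠ 0) (s : Fin N → ℤ) (r : Fin q → Fin N → ℤ) :
    ofCoeff (Tq q s r) = single s 1 * ∏ i, (1 - single (r i) (1 : ℂ)) := by
  have hsign : ∑ I : Finset (Fin q), (-1 : ℂ) ^ I.card = 0 := by
    have : Nonempty (Fin q) := ⟨⟨0, Nat.pos_of_ne_zero hq⟩⟩
    exact_mod_cast Finset.sum_powerset_neg_one_pow_card_of_nonempty Finset.univ_nonempty
  classical
  rw [Tq, ofCoeff_sum, Finset.prod_sub, Finset.powerset_univ, Finset.mul_sum]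
  simp [ofCoeff_TT, smul_sub, ← Finset.sum_smul, hsign]
  refine Finset.sum_congr rfl fun I _ => ?_
  rw [mul_left_comm, single_mul_single, mul_one]
  rcases Nat.even_or_odd I.card with h | h <;> simp [h.neg_one_pow]

theorem ofCoeff_mem_pow_of_mem_Iq {q : ℕ} {y : (Fin N → ℤ) →₀ ℂ} (hy : y ∈ Iq N q) :
    ofCoeff y ∈ augmentationIdeal ℂ (Fin N → ℤ) ^ max q 1 := by
  induction hy using Submodule.span_induction with
  | mem _ h =>
    obtain ⟨s, r, rfl⟩ := h
    rcases Nat.eq_zero_or_pos q with rfl | hq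
    · simpa [Tq_zero, ofCoeff_TT] using single_sub_one_mem_augmentationIdeal s
    · rw [max_eq_left hq, ofCoeff_Tq hq.ne']
      exact Ideal.mul_mem_left _ _ (by simpa using prod_one_sub_single_mem_pow Finset.univ r)
  | zero => exact zero_mem _
  | add _ _ _ _ hx hy => exact add_mem hx hy
  | smul c _ _ hx => exact Submodule.smul_of_tower_mem _ c hx

theorem mem_Iq_of_ofCoeff_mem_pow {q : ℕ} (hq : q ≠ 0) {y : (Fin N → ℤ) →₀ ℂ}
    (hy : ofCoeff y ∈ augmentationIdeal ℂ (Fin N → ℤ) ^ q) : y ∈ Iq N q := by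
  have hspan :
      prodOneSubSpan ℂ (Fin N → ℤ) q ≤ (Iq N q).comap (coeffLinearEquiv ℂ).toLinearMap := by
    refine Submodule.span_le.mpr ?_
    rintro _ ⟨s, r, rfl⟩
    rw [← ofCoeff_Tq hq]
    exact Submodule.subset_span ⟨s, r, rfl⟩
  exact hspan (mem_prodOneSubSpan_of_mem_pow q hy)

theorem ofCoeff_brT (B : Matrix (Fin N) (Fin N) ℂ) (r : Fin N → ℤ) (y : (Fin N → ℤ) →₀ ℂ) :
    ofCoeff (brT B r y) = (single r 1 - 1) *
      augmentationProj ℂ _ (weightDerivation ℂ (dotBAddHom B r) (ofCoeff y)) := by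
  rw [brT, ← Finsupp.linearCombination_apply]
  induction y using Finsupp.induction_linear with
  | zero => simp
  | add y z hy hz => simp only [map_add, ofCoeff_add, hy, hz, mul_add]
  | single s c =>
    simp [ofCoeff_TT, mul_smul, sub_mul, mul_sub, single_mul_single]
    congr 2
    abel

theorem ofCoeff_brF (B : Matrix (Fin N) (Fin N) ℂ) (x y : (Fin N → ℤ) →₀ ℂ) :
    ofCoeff (brF B x y) = ∑ j,
      augmentationProj ℂ _ (weightDerivation ℂ (coordAddHom j) (ofCoeff x)) *
        augmentationProj ℂ _
          (weightDerivation ℂ (dotBAddHom B (Pi.single j 1)) (ofCoeff y)) := by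
  rw [brF, ← Finsupp.linearCombination_apply]
  induction x using Finsupp.induction_linear with
  | zero => simp
  | add x z hx hz => simp only [map_add, ofCoeff_add, hx, hz, add_mul, Finset.sum_add_distrib]
  | single r c =>
    rw [Finsupp.linearCombination_single, ofCoeff_smul, ofCoeff_brT, dotBAddHom_eq_sum,
      weightDerivation_sum_smul, map_sum, Finset.mul_sum, Finset.smul_sum]
    refine Finset.sum_congr rfl fun j _ => ?_
    simp [coordAddHom, smul_smul]

end

theorem Iq_ideal_and_bracket_degree_general (N : ℕ) (B : Matrix (Fin N) (Fin N) ℂ) :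
    (∀ q : ℕ, 1 ≤ q → ∀ (r : Fin N → ℤ), ∀ y ∈ Iq N q, brT B r y ∈ Iq N q) ∧
    (∀ p q : ℕ, 3 ≤ p + q →
      ∀ x ∈ Iq N p, ∀ y ∈ Iq N q, brF B x y ∈ Iq N (p + q - 2)) := by
  constructor
  · intro q hq r y hy
    refine mem_Iq_of_ofCoeff_mem_pow (by omega) ?_
    rw [ofCoeff_brT]
    refine Ideal.pow_le_pow_right (by omega : q ≤ 1 + max (max q 1 - 1) 1) ?_
    rw [pow_add, pow_one]
    exact Ideal.mul_mem_mul (single_sub_one_mem_augmentationIdeal r)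
      (augmentationProj_derivation_mem_pow _ (ofCoeff_mem_pow_of_mem_Iq hy))
  · intro p q hpq x hx y hy
    refine mem_Iq_of_ofCoeff_mem_pow (by omega) ?_
    rw [ofCoeff_brF]
    refine Ideal.sum_mem _ fun j _ => Ideal.pow_le_pow_right
      (by omega : p + q - 2 ≤ max (max p 1 - 1) 1 + max (max q 1 - 1) 1) ?_
    rw [pow_add]
    exact Ideal.mul_mem_mul (augmentationProj_derivation_mem_pow _ (ofCoeff_mem_pow_of_mem_Iq hx))
      (augmentationProj_derivation_mem_pow _ (ofCoeff_mem_pow_of_mem_Iq hy))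

theorem Iq_ideal_and_bracket_degree (N : ℕ) (B : Matrix (Fin N) (Fin N) ℂ)
    (hB : Bᵀ = -B) :
    (∀ q : ℕ, 1 ≤ q → ∀ (r : Fin N → ℤ), ∀ y ∈ Iq N q, brT B r y ∈ Iq N q) ∧
    (∀ p q : ℕ, 3 ≤ p + q →
      ∀ x ∈ Iq N p, ∀ y ∈ Iq N q, brF B x y ∈ Iq N (p + q - 2)) :=
  Iq_ideal_and_bracket_degree_general N B
end

section
/- Let A = C[t_1^{±1},…,t_N^{±1}] be the Laurent polynomial ring and J_q the ideal spanned by {t^r (1-t^{r_1})···(1-t^{r_q}) : r, r_1,…,r_q ∈ Z^N}. Then the intersection ∩_{q≥1} J_q = {0}. -/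
/-!
Pair a Laurent polynomial `x = ∑ x_r t^r` with a function `P : ℤ^N → ℂ` by
`⟨x, P⟩ = ∑ x_r P(r)`. Multiplication by `t^s` is adjoint to translation by `s`, so multiplication
by `1 - t^s` is adjoint to `-Δ_s`; hence `J_q` pairs to zero with every `P` all of whose `q`-fold
forward differences vanish, i.e. with every polynomial function of degree `< q`. For `r₀` in the
support of `f`, a product of affine functions, one vanishing at each other point of the support and
all equal to `1` at `r₀`, is such a `P` for `q` large and pairs with `f` to the coefficient `f_{r₀}`.
-/

/-- The monomial `t^r` in the Laurent polynomial ring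
`ℂ[t_1^{±1}, …, t_N^{±1}]`, modelled as `AddMonoidAlgebra ℂ (Fin N → ℤ)`. -/
noncomputable def tpow {N : ℕ} (r : Fin N → ℤ) : AddMonoidAlgebra ℂ (Fin N → ℤ) :=
  AddMonoidAlgebra.single r 1

/-- `J_q` is the span of all `t^r (1 - t^{r_1}) ⋯ (1 - t^{r_q})`. -/
noncomputable def Jq (N q : ℕ) : Submodule ℂ (AddMonoidAlgebra ℂ (Fin N → ℤ)) :=
  Submodule.span ℂ
    {x | ∃ (r : Fin N → ℤ) (rs : Fin q → (Fin N → ℤ)),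
      x = tpow r * ∏ i : Fin q, (1 - tpow (rs i))}

open fwdDiff

section FwdDiffKernel

variable (M R : Type*) [AddCommMonoid M] [CommRing R]

noncomputable def fwdDiffLinearMap (s : M) : (M → R) →ₗ[R] M → R where
  toFun := fwdDiff s
  map_add' := fwdDiff_add s
  map_smul' := fwdDiff_const_smul s

/-- The polynomial functions of degree `< q`: those all of whose `q`-fold forward differences
vanish. -/
noncomputable def fwdDiffKernel : ℕ → Submodule R (M → R)
  | 0 => ⊥
  | q + 1 => ⨅ s : M, (fwdDiffKernel q).comap (fwdDiffLinearMap M R s)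

variable {M R}

lemma mem_fwdDiffKernel_zero {P : M → R} : P ∈ fwdDiffKernel M R 0 ↔ P = 0 :=
  Submodule.mem_bot R

lemma mem_fwdDiffKernel_succ {q : ℕ} {P : M → R} :
    P ∈ fwdDiffKernel M R (q + 1) ↔ ∀ s, Δ_[s] P ∈ fwdDiffKernel M R q := by
  simp [fwdDiffKernel, Submodule.mem_iInf, fwdDiffLinearMap]

lemma fwdDiffKernel_monotone : Monotone (fwdDiffKernel M R) := by
  refine monotone_nat_of_le_succ fun q => ?_
  induction q with
  | zero =>
    intro P hP
    rw [mem_fwdDiffKernel_zero.1 hP]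
    exact zero_mem _
  | succ q ih =>
    intro P hP
    rw [mem_fwdDiffKernel_succ] at hP ⊢
    exact fun s => ih (hP s)

lemma const_mem_fwdDiffKernel_one (c : R) : (fun _ => c : M → R) ∈ fwdDiffKernel M R 1 :=
  mem_fwdDiffKernel_succ.2 fun s => by rw [fwdDiff_const]; exact zero_mem _

lemma addMonoidHom_mem_fwdDiffKernel_two (φ : M →+ R) : ⇑φ ∈ fwdDiffKernel M R 2 :=
  mem_fwdDiffKernel_succ.2 fun s => by
    convert const_mem_fwdDiffKernel_one (φ s) using 1
    ext x
    simp [fwdDiff]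

lemma comp_add_mem_fwdDiffKernel {q : ℕ} {P : M → R} (hP : P ∈ fwdDiffKernel M R q) (m : M) :
    (fun x => P (x + m)) ∈ fwdDiffKernel M R q := by
  induction q generalizing P with
  | zero =>
    rw [mem_fwdDiffKernel_zero] at hP ⊢
    subst hP
    rfl
  | succ q ih =>
    rw [mem_fwdDiffKernel_succ] at hP ⊢
    intro s
    convert ih (hP s) using 1
    ext x
    exact fwdDiff_comp_add s P m x

lemma fwdDiff_mul (s : M) (P Q : M → R) :
    Δ_[s] (P * Q) = Δ_[s] P * Q + P * Δ_[s] Q + Δ_[s] P * Δ_[s] Q :=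
  fwdDiff_smul s P Q

lemma mul_mem_fwdDiffKernel {a b : ℕ} {P Q : M → R} (hP : P ∈ fwdDiffKernel M R a)
    (hQ : Q ∈ fwdDiffKernel M R b) : P * Q ∈ fwdDiffKernel M R (a + b - 1) := by
  induction a generalizing b P Q with
  | zero => simp [mem_fwdDiffKernel_zero.1 hP]
  | succ a iha =>
    induction b generalizing Q with
    | zero => simp [mem_fwdDiffKernel_zero.1 hQ]
    | succ b ihb =>
      have hΔP := mem_fwdDiffKernel_succ.1 hP
      have hΔQ := mem_fwdDiffKernel_succ.1 hQ
      rw [show a + 1 + (b + 1) - 1 = a + b + 1 by omega, mem_fwdDiffKernel_succ]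
      intro s
      rw [fwdDiff_mul]
      refine add_mem (add_mem ?_ ?_) ?_
      · exact fwdDiffKernel_monotone (by omega) (iha (hΔP s) hQ)
      · exact fwdDiffKernel_monotone (by omega) (ihb (hΔQ s))
      · exact fwdDiffKernel_monotone (by omega) (iha (hΔP s) (hΔQ s))

end FwdDiffKernel

lemma exists_mem_fwdDiffKernel_two_separating {ι K : Type*} [Field K] [CharZero K]
    {r₀ r : ι → ℤ} (h : r ≠ r₀) :
    ∃ L ∈ fwdDiffKernel (ι → ℤ) K 2, L r₀ = 1 ∧ L r = 0 := by
  obtain ⟨j, hj⟩ := Function.ne_iff.1 h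
  let φ : (ι → ℤ) →+ K := (Int.castAddHom K).comp (Pi.evalAddMonoidHom (fun _ => ℤ) j)
  have hφ : φ r₀ - φ r ≠ 0 := sub_ne_zero.2 (by simpa [φ, eq_comm] using hj)
  refine ⟨(φ r₀ - φ r)⁻¹ • (⇑φ - fun _ => φ r), ?_, ?_, ?_⟩
  · refine Submodule.smul_mem _ _ (sub_mem (addMonoidHom_mem_fwdDiffKernel_two φ) ?_)
    exact fwdDiffKernel_monotone one_le_two (const_mem_fwdDiffKernel_one _)
  · simp [inv_mul_cancel₀ hφ]
  · simp

lemma exists_mem_fwdDiffKernel_interpolating {ι K : Type*} [Field K] [CharZero K]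
    (S : Finset (ι → ℤ)) {r₀ : ι → ℤ} (h : r₀ ∉ S) :
    ∃ P ∈ fwdDiffKernel (ι → ℤ) K (S.card + 1), P r₀ = 1 ∧ ∀ r ∈ S, P r = 0 := by
  classical
  induction S using Finset.induction_on with
  | empty => exact ⟨fun _ => 1, const_mem_fwdDiffKernel_one 1, rfl, by simp⟩
  | @insert a S ha ih =>
    obtain ⟨hne, hS⟩ : r₀ ≠ a ∧ r₀ ∉ S := by simpa [not_or] using h
    obtain ⟨L, hL, hL₀, hLa⟩ := exists_mem_fwdDiffKernel_two_separating (K := K) (Ne.symm hne)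
    obtain ⟨P, hP, hP₀, hPS⟩ := ih hS
    refine ⟨L * P, ?_, by simp [hL₀, hP₀], ?_⟩
    · rw [Finset.card_insert_of_notMem ha]
      exact fwdDiffKernel_monotone (by omega) (mul_mem_fwdDiffKernel hL hP)
    · rintro r hr
      rcases Finset.mem_insert.1 hr with rfl | hr
      · simp [hLa]
      · simp [hPS r hr]

section Pairing

variable {M R : Type*}

section CommSemiring

variable [CommSemiring R]

noncomputable def pairing (P : M → R) : AddMonoidAlgebra R M →ₗ[R] R :=
  (AddMonoidAlgebra.basis M R).constr R P

lemma pairing_single (P : M → R) (m : M) (r : R) :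
    pairing P (AddMonoidAlgebra.single m r) = r * P m := by
  rw [← mul_one r, ← AddMonoidAlgebra.smul_single', map_smul, mul_one, smul_eq_mul]
  exact congrArg (r * ·) ((AddMonoidAlgebra.basis M R).constr_basis R P m)

lemma pairing_eq_coeff {P : M → R} {x : AddMonoidAlgebra R M} {m : M} (hm : P m = 1)
    (hP : ∀ r ∈ x.coeff.support, r ≠ m → P r = 0) : pairing P x = x.coeff m := by
  rw [pairing, Module.Basis.constr_apply]
  change x.coeff.sum _ = _
  rw [Finsupp.sum_eq_single m
    (fun r hr hne => by rw [hP r (Finsupp.mem_support_iff.2 hr) hne, smul_zero]) (by simp),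
    hm, smul_eq_mul, mul_one]

lemma pairing_single_one_mul [AddCommMonoid M] (P : M → R) (m : M) (x : AddMonoidAlgebra R M) :
    pairing P (AddMonoidAlgebra.single m 1 * x) = pairing (fun y => P (y + m)) x := by
  induction x using AddMonoidAlgebra.induction_linear with
  | zero => simp
  | add x y hx hy => rw [mul_add, map_add, map_add, hx, hy]
  | single a r => rw [AddMonoidAlgebra.single_mul_single, one_mul, pairing_single,
      pairing_single, add_comm]

end CommSemiring

variable [CommRing R] [AddCommMonoid M]

lemma pairing_one_sub_single_mul (P : M → R) (s : M) (x : AddMonoidAlgebra R M) :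
    pairing P ((1 - AddMonoidAlgebra.single s 1) * x) = -pairing (Δ_[s] P) x := by
  induction x using AddMonoidAlgebra.induction_linear with
  | zero => simp
  | add x y hx hy => rw [mul_add, map_add, map_add, hx, hy, neg_add]
  | single a r =>
    rw [sub_mul, one_mul, map_sub, pairing_single_one_mul, pairing_single, pairing_single,
      pairing_single, fwdDiff]
    ring

lemma pairing_prod_one_sub_single_eq_zero {q : ℕ} {P : M → R}
    (hP : P ∈ fwdDiffKernel M R q) (s : Fin q → M) :
    pairing P (∏ i, (1 - AddMonoidAlgebra.single (s i) 1)) = 0 := by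
  induction q generalizing P with
  | zero => simp [mem_fwdDiffKernel_zero.1 hP, pairing]
  | succ q ih =>
    rw [Fin.prod_univ_succ, pairing_one_sub_single_mul,
      ih (mem_fwdDiffKernel_succ.1 hP (s 0)) (fun i => s i.succ), neg_zero]

end Pairing

lemma Jq_le_ker_pairing {N q : ℕ} {P : (Fin N → ℤ) → ℂ} (hP : P ∈ fwdDiffKernel _ ℂ q) :
    Jq N q ≤ LinearMap.ker (pairing P) := by
  rw [Jq, Submodule.span_le]
  rintro _ ⟨r, rs, rfl⟩
  exact (pairing_single_one_mul P r _).trans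
    (pairing_prod_one_sub_single_eq_zero (comp_add_mem_fwdDiffKernel hP r) rs)

theorem Jq_intersection_trivial (N : ℕ) :
    (⨅ (q : ℕ) (_ : 1 ≤ q), Jq N q) = ⊥ := by
  refine eq_bot_iff.2 fun f hf => ?_
  simp only [Submodule.mem_iInf] at hf
  rw [Submodule.mem_bot, ← AddMonoidAlgebra.coeff_eq_zero]
  ext r₀
  obtain ⟨P, hP, hP₀, hPS⟩ :=
    exists_mem_fwdDiffKernel_interpolating (K := ℂ) (f.coeff.support.erase r₀)
      (Finset.notMem_erase r₀ _)
  calc f.coeff r₀ = pairing P f :=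
        (pairing_eq_coeff hP₀ fun r hr hne => hPS r (Finset.mem_erase.2 ⟨hne, hr⟩)).symm
    _ = 0 := Jq_le_ker_pairing hP (hf _ (Nat.le_add_left 1 _))
end
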